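/- arXiv:1903.08984 — 3 statements merged into one kernel-verified Lean document; each statement's English description precedes it below -/
import Mathlib

section
/- For an odd integer n ≥ 3, the linear system C_{n,n+1} has transversal number τ(C_{n,n+1}) = n + 1. -/
open Finset

/-- Points of the linear system `C_{n,n+1}`: `Sum.inl (h, g)` are the grid points
(used when `g ≠ 0`), `Sum.inr false` is the point `p`, `Sum.inr true` is the point `q`. -/
abbrev Pt (Γ : Type) := (Γ × Γ) ⊕ Bool

variable {Γ : Type} [AddCommGroup Γ] [Fintype Γ] [DecidableEq Γ]

/-- The horizontal line `L_g = {(h,g) : h ∈ Γ}` (used for `g ≠ 0`). -/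
def Lh (g : Γ) : Finset (Pt Γ) := univ.image fun h => Sum.inl (h, g)

/-- The line `l_{p_g} = {(g,h) : h ∈ Γ \ {0}} ∪ {p}` through `p`. -/
def Lp (g : Γ) : Finset (Pt Γ) :=
  ((univ.filter fun h => h ≠ (0 : Γ)).image fun h => Sum.inl (g, h)) ∪ {Sum.inr false}

/-- The line `l_{q_g} = {(h, h+g) : h ∈ Γ, h+g ≠ 0} ∪ {q}` through `q`. -/
def Lq (g : Γ) : Finset (Pt Γ) :=
  ((univ.filter fun h => h + g ≠ (0 : Γ)).image fun h => Sum.inl (h, h + g)) ∪ {Sum.inr true}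

/-- The line set of the linear system `C_{n,n+1}`. -/
def CL (Γ : Type) [AddCommGroup Γ] [Fintype Γ] [DecidableEq Γ] : Finset (Finset (Pt Γ)) :=
  ((univ.filter fun g => g ≠ (0 : Γ)).image Lh) ∪ (univ.image Lp) ∪ (univ.image Lq)

/-- The transversal number of `C_{n,n+1}`. -/
noncomputable def tau (Γ : Type) [AddCommGroup Γ] [Fintype Γ] [DecidableEq Γ] : ℕ :=
  sInf {m | ∃ T : Finset (Pt Γ), (∀ l ∈ CL Γ, (l ∩ T).Nonempty) ∧ T.card = m}

lemma Lh_mem_CL {g : Γ} (hg : g ≠ 0) : Lh g ∈ CL Γ := by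
  simp only [CL, mem_union, mem_image, mem_filter, mem_univ, true_and]
  exact Or.inl (Or.inl ⟨g, hg, rfl⟩)

lemma Lp_mem_CL (g : Γ) : Lp g ∈ CL Γ := by
  simp only [CL, mem_union, mem_image, mem_univ, true_and]
  exact Or.inl (Or.inr ⟨g, rfl⟩)

lemma Lq_mem_CL (g : Γ) : Lq g ∈ CL Γ := by
  simp only [CL, mem_union, mem_image, mem_univ, true_and]
  exact Or.inr ⟨g, rfl⟩

lemma mem_Lp {g : Γ} {x : Pt Γ} (hx : x ∈ Lp g) :
    (∃ h : Γ, h ≠ 0 ∧ x = Sum.inl (g, h)) ∨ x = Sum.inr false := by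
  simp only [Lp, mem_union, mem_image, mem_filter, mem_univ, true_and, mem_singleton] at hx
  rcases hx with ⟨h, h0, rfl⟩ | rfl
  · exact Or.inl ⟨h, h0, rfl⟩
  · exact Or.inr rfl

lemma mem_Lq {g : Γ} {x : Pt Γ} (hx : x ∈ Lq g) :
    (∃ h : Γ, h + g ≠ 0 ∧ x = Sum.inl (h, h + g)) ∨ x = Sum.inr true := by
  simp only [Lq, mem_union, mem_image, mem_filter, mem_univ, true_and, mem_singleton] at hx
  rcases hx with ⟨h, h0, rfl⟩ | rfl
  · exact Or.inl ⟨h, h0, rfl⟩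
  · exact Or.inr rfl

lemma mem_Lh {g : Γ} {x : Pt Γ} (hx : x ∈ Lh g) : ∃ h : Γ, x = Sum.inl (h, g) := by
  simp only [Lh, mem_image, mem_univ, true_and] at hx
  rcases hx with ⟨h, rfl⟩
  exact ⟨h, rfl⟩

/-- Lower bound: any transversal has at least `|Γ| + 1` points. -/
lemma lower_bound (n : ℕ) (hn : Fintype.card Γ = n) (h3 : 3 ≤ n)
    (hsum : ∑ g : Γ, g = 0)
    (T : Finset (Pt Γ)) (hT : ∀ l ∈ CL Γ, (l ∩ T).Nonempty) :
    n + 1 ≤ T.card := by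
  by_cases hp : (Sum.inr false : Pt Γ) ∈ T
  · -- p ∈ T
    by_cases hq : (Sum.inr true : Pt Γ) ∈ T
    · -- rows give n-1 points
      have hrow : ∀ g : Γ, ∃ w : Γ, g ≠ 0 → Sum.inl (w, g) ∈ T := by
        intro g
        by_cases hg : g = 0
        · exact ⟨0, fun h => absurd hg h⟩
        · obtain ⟨x, hx⟩ := hT (Lh g) (Lh_mem_CL hg)
          rw [mem_inter] at hx
          obtain ⟨w, rfl⟩ := mem_Lh hx.1
          exact ⟨w, fun _ => hx.2⟩
      choose w hw using hrow
      set R : Finset (Pt Γ) := (univ.erase (0 : Γ)).image fun g => Sum.inl (w g, g) with hR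
      have hRcard : R.card = n - 1 := by
        rw [hR, card_image_of_injOn, card_erase_of_mem (mem_univ 0), card_univ, hn]
        intro a _ b _ hab
        simpa using (Prod.ext_iff.mp (Sum.inl.inj hab)).2
      have hsub : insert (Sum.inr false) (insert (Sum.inr true) R) ⊆ T := by
        intro x hx
        simp only [mem_insert] at hx
        rcases hx with rfl | rfl | hx
        · exact hp
        · exact hq
        · rw [hR, mem_image] at hx
          obtain ⟨g, hg, rfl⟩ := hx
          exact hw g (by simpa using (mem_erase.mp hg).1)
      have hcard : (insert (Sum.inr false) (insert (Sum.inr true) R)).card = n + 1 := by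
        rw [card_insert_of_notMem, card_insert_of_notMem, hRcard]
        · omega
        · simp [hR]
        · simp [hR]
      calc n + 1 = _ := hcard.symm
        _ ≤ T.card := card_le_card hsub
    · -- q ∉ T : diagonals give n points, plus p
      have hdiag : ∀ d : Γ, ∃ h : Γ, Sum.inl (h, h + d) ∈ T := by
        intro d
        obtain ⟨x, hx⟩ := hT (Lq d) (Lq_mem_CL d)
        rw [mem_inter] at hx
        rcases mem_Lq hx.1 with ⟨h, _, rfl⟩ | rfl
        · exact ⟨h, hx.2⟩
        · exact absurd hx.2 hq
      choose h hh using hdiag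
      set D : Finset (Pt Γ) := univ.image fun d => Sum.inl (h d, h d + d) with hD
      have hDcard : D.card = n := by
        rw [hD, card_image_of_injOn, card_univ, hn]
        intro a _ b _ hab
        have h1 := (Prod.ext_iff.mp (Sum.inl.inj hab)).1
        simp only at h1
        have h2 := (Prod.ext_iff.mp (Sum.inl.inj hab)).2
        simp only at h2
        rw [h1] at h2
        exact add_left_cancel h2
      have hsub : insert (Sum.inr false) D ⊆ T := by
        intro x hx
        rcases mem_insert.mp hx with rfl | hx
        · exact hp
        · rw [hD, mem_image] at hx
          obtain ⟨d, _, rfl⟩ := hx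
          exact hh d
      have hcard : (insert (Sum.inr false) D).card = n + 1 := by
        rw [card_insert_of_notMem, hDcard]
        simp [hD]
      calc n + 1 = _ := hcard.symm
        _ ≤ T.card := card_le_card hsub
  · -- p ∉ T : columns give n points
    have hcol : ∀ g : Γ, ∃ v : Γ, v ≠ 0 ∧ Sum.inl (g, v) ∈ T := by
      intro g
      obtain ⟨x, hx⟩ := hT (Lp g) (Lp_mem_CL g)
      rw [mem_inter] at hx
      rcases mem_Lp hx.1 with ⟨v, hv, rfl⟩ | rfl
      · exact ⟨v, hv, hx.2⟩
      · exact absurd hx.2 hp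
    choose f hf0 hfT using hcol
    set C : Finset (Pt Γ) := univ.image fun g => Sum.inl (g, f g) with hC
    have hCcard : C.card = n := by
      rw [hC, card_image_of_injOn, card_univ, hn]
      intro a _ b _ hab
      exact (Prod.ext_iff.mp (Sum.inl.inj hab)).1
    have hCsub : C ⊆ T := by
      intro x hx
      rw [hC, mem_image] at hx
      obtain ⟨g, _, rfl⟩ := hx
      exact hfT g
    by_cases hq : (Sum.inr true : Pt Γ) ∈ T
    · have hsub : insert (Sum.inr true) C ⊆ T := by
        intro x hx
        rcases mem_insert.mp hx with rfl | hx
        · exact hq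
        · exact hCsub hx
      have hcard : (insert (Sum.inr true) C).card = n + 1 := by
        rw [card_insert_of_notMem, hCcard]
        simp [hC]
      calc n + 1 = _ := hcard.symm
        _ ≤ T.card := card_le_card hsub
    · -- main case: p, q ∉ T
      by_contra hlt
      push_neg at hlt
      have hTC : C = T := eq_of_subset_of_card_le hCsub (by rw [hCcard]; omega)
      have hmemC : ∀ x : Pt Γ, x ∈ T → ∃ g : Γ, x = Sum.inl (g, f g) := by
        intro x hx
        rw [← hTC, hC, mem_image] at hx
        obtain ⟨g, _, rfl⟩ := hx
        exact ⟨g, rfl⟩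
      -- diagonals: g ↦ f g - g is surjective
      have hdsurj : Function.Surjective (fun g : Γ => f g - g) := by
        intro d
        obtain ⟨x, hx⟩ := hT (Lq d) (Lq_mem_CL d)
        rw [mem_inter] at hx
        rcases mem_Lq hx.1 with ⟨h, _, rfl⟩ | rfl
        · obtain ⟨g, hg⟩ := hmemC _ hx.2
          have h1 := (Prod.ext_iff.mp (Sum.inl.inj hg)).1
          simp only at h1
          have h2 := (Prod.ext_iff.mp (Sum.inl.inj hg)).2
          simp only at h2
          refine ⟨h, ?_⟩
          simp only
          rw [← h1] at h2
          rw [← h2]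
          abel
        · exact absurd hx.2 hq
      have hdbij : Function.Bijective (fun g : Γ => f g - g) :=
        (Finite.surjective_iff_bijective).mp hdsurj
      have hsumf : ∑ g : Γ, f g = 0 := by
        have h1 : ∑ g : Γ, (f g - g) = ∑ g : Γ, g :=
          Fintype.sum_bijective _ hdbij _ _ (fun x => rfl)
        rw [Finset.sum_sub_distrib, hsum, sub_zero] at h1
        exact h1
      -- rows: f is surjective onto nonzero elements
      have hrow : ∀ g : Γ, g ≠ 0 → ∃ h : Γ, f h = g := by
        intro g hg
        obtain ⟨x, hx⟩ := hT (Lh g) (Lh_mem_CL hg)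
        rw [mem_inter] at hx
        obtain ⟨h, rfl⟩ := mem_Lh hx.1
        obtain ⟨g', hg'⟩ := hmemC _ hx.2
        have h1 := (Prod.ext_iff.mp (Sum.inl.inj hg')).1
        simp only at h1
        have h2 := (Prod.ext_iff.mp (Sum.inl.inj hg')).2
        simp only at h2
        exact ⟨g', h2.symm⟩
      -- f is not injective
      have hninj : ¬ Function.Injective f := by
        intro hinj
        obtain ⟨g, hg⟩ := (Finite.injective_iff_surjective.mp hinj) 0
        exact hf0 g hg
      obtain ⟨a, b, hab, hne⟩ := Function.not_injective_iff.mp hninj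
      -- image of f on univ.erase a is univ.erase 0
      have himg : (univ.erase a).image f = univ.erase (0 : Γ) := by
        ext v
        simp only [mem_image, mem_erase, mem_univ, and_true, true_and]
        constructor
        · rintro ⟨x, _, rfl⟩
          exact hf0 x
        · intro hv
          obtain ⟨h, hh⟩ := hrow v hv
          by_cases hha : h = a
          · exact ⟨b, hne.symm, by rw [← hab, ← hha, hh]⟩
          · exact ⟨h, hha, hh⟩
      have hcards : ((univ.erase a).image f).card = (univ.erase a).card := by
        rw [himg, card_erase_of_mem (mem_univ 0), card_erase_of_mem (mem_univ a)]
      have hinjOn := injOn_of_card_image_eq hcards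
      have hsum1 : ∑ x ∈ univ.erase a, f x = ∑ v ∈ univ.erase (0 : Γ), v := by
        rw [← himg, sum_image hinjOn]
      have hsum2 : ∑ v ∈ univ.erase (0 : Γ), v = 0 := by
        have := Finset.sum_erase_add univ (id : Γ → Γ) (mem_univ (0 : Γ))
        simpa [hsum] using this
      have hsum3 : ∑ x ∈ univ.erase a, f x + f a = ∑ g : Γ, f g :=
        Finset.sum_erase_add univ f (mem_univ a)
      rw [hsum1, hsum2, zero_add, hsumf] at hsum3
      exact hf0 a hsum3

/-- Proposition 3.1: for odd `n ≥ 3` (with `Γ` a neutral sum group of order `n`),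
the transversal number of `C_{n,n+1}` is `n + 1`. -/
theorem tau_C_eq (n : ℕ) (hn : Fintype.card Γ = n) (hodd : Odd n) (h3 : 3 ≤ n)
    (hsum : ∑ g : Γ, g = 0) (h2 : ∀ k : Γ, k + k = 0 → k = 0) :
    tau Γ = n + 1 := by
  have hub : (n + 1) ∈ {m | ∃ T : Finset (Pt Γ), (∀ l ∈ CL Γ, (l ∩ T).Nonempty) ∧ T.card = m} := by
    refine ⟨insert (Sum.inr false) (insert (Sum.inr true)
      ((univ.erase (0 : Γ)).image fun g => Sum.inl (g, g))), ?_, ?_⟩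
    · intro l hl
      simp only [CL, mem_union, mem_image, mem_filter, mem_univ, true_and] at hl
      rcases hl with (⟨g, hg, rfl⟩ | ⟨g, rfl⟩) | ⟨g, rfl⟩
      · refine ⟨Sum.inl (g, g), mem_inter.mpr ⟨?_, ?_⟩⟩
        · simp [Lh]
        · simp [mem_insert, mem_image, hg]
      · refine ⟨Sum.inr false, mem_inter.mpr ⟨?_, ?_⟩⟩
        · simp [Lp]
        · simp
      · refine ⟨Sum.inr true, mem_inter.mpr ⟨?_, ?_⟩⟩
        · simp [Lq]
        · simp
    · rw [card_insert_of_notMem (by simp), card_insert_of_notMem (by simp),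
        card_image_of_injOn (by intro x _ y _ hxy; simpa using (Prod.ext_iff.mp (Sum.inl.inj hxy)).1),
        card_erase_of_mem (mem_univ 0), card_univ, hn]
      omega
  refine le_antisymm (Nat.sInf_le hub) (le_csInf ⟨n + 1, hub⟩ ?_)
  rintro m ⟨T, hT, rfl⟩
  exact lower_bound n hn h3 hsum T hT
end

section
/- For an odd integer n ≥ 3, the linear system C_{n,n+1} has 2-packing number ν₂(C_{n,n+1}) = n + 1. -/
set_option linter.unusedSectionVars false

open Finset

variable {Γ : Type} [AddCommGroup Γ] [Fintype Γ] [DecidableEq Γ]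

/-- The 2-packing number of `C_{n,n+1}`. -/
noncomputable def nu2 (Γ : Type) [AddCommGroup Γ] [Fintype Γ] [DecidableEq Γ] : ℕ :=
  sSup {m | ∃ R : Finset (Finset (Pt Γ)), R ⊆ CL Γ ∧
    (∀ x : Pt Γ, (R.filter fun l => x ∈ l).card ≤ 2) ∧ R.card = m}

/-! ### Auxiliary lemmas -/

@[simp] lemma mem_Lh_s7 {a b g : Γ} : (Sum.inl (a,b) : Pt Γ) ∈ Lh g ↔ b = g := by
  simp [Lh]; aesop

@[simp] lemma inr_mem_Lh {c : Bool} {g : Γ} : (Sum.inr c : Pt Γ) ∉ Lh g := by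
  simp [Lh]

@[simp] lemma mem_Lp_s7 {a b g : Γ} : (Sum.inl (a,b) : Pt Γ) ∈ Lp g ↔ a = g ∧ b ≠ 0 := by
  simp [Lp]; aesop

@[simp] lemma inr_mem_Lp {c : Bool} {g : Γ} : (Sum.inr c : Pt Γ) ∈ Lp g ↔ c = false := by
  simp [Lp]

@[simp] lemma mem_Lq_s7 {a b g : Γ} : (Sum.inl (a,b) : Pt Γ) ∈ Lq g ↔ b = a + g ∧ b ≠ 0 := by
  simp [Lq]; aesop

@[simp] lemma inr_mem_Lq {c : Bool} {g : Γ} : (Sum.inr c : Pt Γ) ∈ Lq g ↔ c = true := by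
  simp [Lq]

lemma Lh_inj {g g' : Γ} (h : Lh g = Lh g') : g = g' := by
  have h1 : (Sum.inl ((0:Γ), g) : Pt Γ) ∈ Lh g := mem_Lh_s7.mpr rfl
  rw [h] at h1
  exact mem_Lh_s7.mp h1

lemma Lp_inj [Nontrivial Γ] {g g' : Γ} (h : Lp g = Lp g') : g = g' := by
  obtain ⟨b, hb⟩ := exists_ne (0 : Γ)
  have h1 : (Sum.inl (g, b) : Pt Γ) ∈ Lp g := mem_Lp_s7.mpr ⟨rfl, hb⟩
  rw [h] at h1
  exact (mem_Lp_s7.mp h1).1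

lemma Lq_inj [Nontrivial Γ] {g g' : Γ} (h : Lq g = Lq g') : g = g' := by
  obtain ⟨b, hb⟩ := exists_ne (0 : Γ)
  have h1 : (Sum.inl (b - g, b) : Pt Γ) ∈ Lq g := mem_Lq_s7.mpr ⟨by abel, hb⟩
  rw [h] at h1
  have h2 := (mem_Lq_s7.mp h1).1
  have h3 : b - g + g = b - g + g' := by rw [← h2]; abel
  exact add_left_cancel h3

lemma Lh_ne_Lp {g g' : Γ} : Lh g ≠ Lp g' := by
  intro e
  have h1 : (Sum.inr false : Pt Γ) ∈ Lh g := by rw [e]; simp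
  exact inr_mem_Lh h1

lemma Lh_ne_Lq {g g' : Γ} : Lh g ≠ Lq g' := by
  intro e
  have h1 : (Sum.inr true : Pt Γ) ∈ Lh g := by rw [e]; simp
  exact inr_mem_Lh h1

lemma Lp_ne_Lq {g g' : Γ} : Lp g ≠ Lq g' := by
  intro e
  have h1 : (Sum.inr true : Pt Γ) ∈ Lp g := by rw [e]; simp
  simpa using h1

lemma CL_cases {l : Finset (Pt Γ)} (hl : l ∈ CL Γ) :
    (∃ g, g ≠ 0 ∧ l = Lh g) ∨ (∃ g, l = Lp g) ∨ (∃ g, l = Lq g) := by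
  simp only [CL, mem_union, mem_image, mem_filter, mem_univ, true_and] at hl
  rcases hl with (⟨g, hg, e⟩ | ⟨g, e⟩) | ⟨g, e⟩
  · exact Or.inl ⟨g, hg, e.symm⟩
  · exact Or.inr (Or.inl ⟨g, e.symm⟩)
  · exact Or.inr (Or.inr ⟨g, e.symm⟩)

lemma CL_inl {l : Finset (Pt Γ)} (hl : l ∈ CL Γ) {a b : Γ}
    (hx : (Sum.inl (a,b) : Pt Γ) ∈ l) :
    l = Lh b ∨ l = Lp a ∨ l = Lq (b - a) := by
  rcases CL_cases hl with ⟨g, _, rfl⟩ | ⟨g, rfl⟩ | ⟨g, rfl⟩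
  · left; rw [mem_Lh_s7.mp hx]
  · right; left; rw [(mem_Lp_s7.mp hx).1]
  · right; right
    have h1 := (mem_Lq_s7.mp hx).1
    have h2 : b - a = g := by rw [h1]; abel
    rw [h2]

lemma card_le_two_of {α : Type*} [DecidableEq α] {s : Finset α} {u v w : α}
    (hs : ∀ x ∈ s, x = u ∨ x = v ∨ x = w) (h : u ∉ s ∨ v ∉ s ∨ w ∉ s) : s.card ≤ 2 := by
  have hpair : ∀ a b : α, s ⊆ {a, b} → s.card ≤ 2 := fun a b hsub =>
    (card_le_card hsub).trans ((card_insert_le _ _).trans (by simp))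
  rcases h with h | h | h
  · refine hpair v w fun x hx => ?_
    rcases hs x hx with rfl | rfl | rfl
    · exact absurd hx h
    · simp
    · simp
  · refine hpair u w fun x hx => ?_
    rcases hs x hx with rfl | rfl | rfl
    · simp
    · exact absurd hx h
    · simp
  · refine hpair u v fun x hx => ?_
    rcases hs x hx with rfl | rfl | rfl
    · simp
    · simp
    · exact absurd hx h

lemma key_count (hT : ∀ k : Γ, k + k = 0 → k = 0) (SB SC : Finset Γ)
    (hB : SB.card ≤ 2) (hC : SC.card ≤ 2) :
    SB.card + SC.card ≤ (((SB ×ˢ SC).image fun p => p.1 + p.2).erase 0).card + 2 := by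
  set F := ((SB ×ˢ SC).image fun p => p.1 + p.2).erase 0 with hF
  have hmem : ∀ a ∈ SB, ∀ b ∈ SC, a + b ≠ 0 → a + b ∈ F := by
    intro a ha b hb hne
    rw [hF, mem_erase]
    exact ⟨hne, mem_image.mpr ⟨(a, b), mem_product.mpr ⟨ha, hb⟩, rfl⟩⟩
  rcases Nat.lt_or_ge (SB.card + SC.card) 3 with hlt | hge
  · omega
  by_cases hB2 : SB.card = 2
  · by_cases hC2 : SC.card = 2
    · obtain ⟨a1, ha1, a2, ha2, hane⟩ := one_lt_card.mp (by omega : 1 < SB.card)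
      obtain ⟨b1, hb1, b2, hb2, hbne⟩ := one_lt_card.mp (by omega : 1 < SC.card)
      have pairlem : a1 + b1 = a2 + b2 → a1 + b2 = a2 + b1 → False := by
        intro e1 e2
        have e5 : (a1 + b1) + (a2 + b1) = (a2 + b2) + (a1 + b2) := by rw [e1, ← e2]
        have e6 : (b1 - b2) + (b1 - b2) = 0 := by
          calc (b1 - b2) + (b1 - b2)
              = ((a1 + b1) + (a2 + b1)) - ((a2 + b2) + (a1 + b2)) := by abel
            _ = 0 := by rw [e5, sub_self]
        exact hbne (sub_eq_zero.mp (hT _ e6))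
      have main : ∃ x ∈ F, ∃ y ∈ F, x ≠ y := by
        by_cases z11 : a1 + b1 = 0
        · have z12 : a1 + b2 ≠ 0 := fun e => hbne (add_left_cancel (z11.trans e.symm))
          have z21 : a2 + b1 ≠ 0 := fun e => hane (add_right_cancel (z11.trans e.symm))
          by_cases e : a1 + b2 = a2 + b1
          · have z22 : a2 + b2 ≠ 0 := fun e22 => pairlem (z11.trans e22.symm) e
            exact ⟨a1 + b2, hmem _ ha1 _ hb2 z12, a2 + b2, hmem _ ha2 _ hb2 z22,
              fun e' => hane (add_right_cancel e')⟩
          · exact ⟨a1 + b2, hmem _ ha1 _ hb2 z12, a2 + b1, hmem _ ha2 _ hb1 z21, e⟩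
        · by_cases z12 : a1 + b2 = 0
          · have z22 : a2 + b2 ≠ 0 := fun e => hane (add_right_cancel (z12.trans e.symm))
            by_cases e : a1 + b1 = a2 + b2
            · have z21 : a2 + b1 ≠ 0 := fun e21 => pairlem e (z12.trans e21.symm)
              exact ⟨a1 + b1, hmem _ ha1 _ hb1 z11, a2 + b1, hmem _ ha2 _ hb1 z21,
                fun e' => hane (add_right_cancel e')⟩
            · exact ⟨a1 + b1, hmem _ ha1 _ hb1 z11, a2 + b2, hmem _ ha2 _ hb2 z22, e⟩
          · exact ⟨a1 + b1, hmem _ ha1 _ hb1 z11, a1 + b2, hmem _ ha1 _ hb2 z12,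
              fun e => hbne (add_left_cancel e)⟩
      obtain ⟨x, hx, y, hy, hxy⟩ := main
      have h2F : 1 < F.card := one_lt_card.mpr ⟨x, hx, y, hy, hxy⟩
      omega
    · obtain ⟨a1, ha1, a2, ha2, hane⟩ := one_lt_card.mp (by omega : 1 < SB.card)
      obtain ⟨b, hb⟩ := card_pos.mp (by omega : 0 < SC.card)
      have h1F : 0 < F.card := by
        by_cases z1 : a1 + b = 0
        · have z2 : a2 + b ≠ 0 := fun e => hane (add_right_cancel (z1.trans e.symm))
          exact card_pos.mpr ⟨a2 + b, hmem _ ha2 _ hb z2⟩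
        · exact card_pos.mpr ⟨a1 + b, hmem _ ha1 _ hb z1⟩
      omega
  · have hC2 : SC.card = 2 := by omega
    obtain ⟨b1, hb1, b2, hb2, hbne⟩ := one_lt_card.mp (by omega : 1 < SC.card)
    obtain ⟨a, ha⟩ := card_pos.mp (by omega : 0 < SB.card)
    have h1F : 0 < F.card := by
      by_cases z1 : a + b1 = 0
      · have z2 : a + b2 ≠ 0 := fun e => hbne (add_left_cancel (z1.trans e.symm))
        exact card_pos.mpr ⟨a + b2, hmem _ ha _ hb2 z2⟩
      · exact card_pos.mpr ⟨a + b1, hmem _ ha _ hb1 z1⟩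
    omega

/-- Proposition 3.2: for odd `n ≥ 3` (with `Γ` a neutral sum group of order `n`),
the 2-packing number of `C_{n,n+1}` is `n + 1`. -/
theorem nu2_C_eq (n : ℕ) (hn : Fintype.card Γ = n) (hodd : Odd n) (h3 : 3 ≤ n)
    (hsum : ∑ g : Γ, g = 0) (h2 : ∀ k : Γ, k + k = 0 → k = 0) :
    nu2 Γ = n + 1 := by
  classical
  haveI hnt : Nontrivial Γ := Fintype.one_lt_card_iff_nontrivial.mp (by omega)
  obtain ⟨d, hd⟩ := exists_ne (0 : Γ)
  have h0d : (0:Γ) ≠ d := Ne.symm hd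
  have h0nd : (0:Γ) ≠ -d := Ne.symm (neg_ne_zero.mpr hd)
  have hdd : d ≠ -d := by
    intro e
    apply hd
    apply h2
    nth_rewrite 2 [e]
    abel
  -- Upper bound
  have hub : ∀ m : ℕ, (∃ R : Finset (Finset (Pt Γ)), R ⊆ CL Γ ∧
      (∀ x : Pt Γ, (R.filter fun l => x ∈ l).card ≤ 2) ∧ R.card = m) → m ≤ n + 1 := by
    rintro m ⟨R, hR, hpack, rfl⟩
    set SA := univ.filter (fun g : Γ => Lh g ∈ R) with hSA
    set SB := univ.filter (fun g : Γ => Lp g ∈ R) with hSB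
    set SC := univ.filter (fun g : Γ => Lq g ∈ R) with hSC
    set F := ((SB ×ˢ SC).image fun p => p.1 + p.2).erase 0 with hF
    have hRsub : R ⊆ SA.image Lh ∪ SB.image Lp ∪ SC.image Lq := by
      intro l hl
      rcases CL_cases (hR hl) with ⟨g, _, rfl⟩ | ⟨g, rfl⟩ | ⟨g, rfl⟩
      · exact mem_union_left _ (mem_union_left _
          (mem_image_of_mem _ (mem_filter.mpr ⟨mem_univ g, hl⟩)))
      · exact mem_union_left _ (mem_union_right _
          (mem_image_of_mem _ (mem_filter.mpr ⟨mem_univ g, hl⟩)))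
      · exact mem_union_right _ (mem_image_of_mem _ (mem_filter.mpr ⟨mem_univ g, hl⟩))
    have hcard : R.card ≤ SA.card + SB.card + SC.card := by
      have t1 := card_le_card hRsub
      have t2 := card_union_le (SA.image Lh ∪ SB.image Lp) (SC.image Lq)
      have t3 := card_union_le (SA.image Lh) (SB.image Lp)
      have i1 := card_image_le (s := SA) (f := Lh)
      have i2 := card_image_le (s := SB) (f := Lp)
      have i3 := card_image_le (s := SC) (f := Lq)
      omega
    have hBle : SB.card ≤ 2 := by
      have himg : SB.image Lp ⊆ R.filter (fun l => (Sum.inr false : Pt Γ) ∈ l) := by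
        intro l hl
        obtain ⟨g, hg, rfl⟩ := mem_image.mp hl
        exact mem_filter.mpr ⟨(mem_filter.mp hg).2, by simp⟩
      have h1 := card_le_card himg
      rw [card_image_of_injective _ (fun a b e => Lp_inj e)] at h1
      exact h1.trans (hpack _)
    have hCle : SC.card ≤ 2 := by
      have himg : SC.image Lq ⊆ R.filter (fun l => (Sum.inr true : Pt Γ) ∈ l) := by
        intro l hl
        obtain ⟨g, hg, rfl⟩ := mem_image.mp hl
        exact mem_filter.mpr ⟨(mem_filter.mp hg).2, by simp⟩
      have h1 := card_le_card himg
      rw [card_image_of_injective _ (fun a b e => Lq_inj e)] at h1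
      exact h1.trans (hpack _)
    have hA0 : (0:Γ) ∉ SA := by
      rw [hSA, mem_filter]
      rintro ⟨-, h0⟩
      rcases CL_cases (hR h0) with ⟨g, hg, e⟩ | ⟨g, e⟩ | ⟨g, e⟩
      · exact hg (Lh_inj e).symm
      · exact Lh_ne_Lp e
      · exact Lh_ne_Lq e
    have hAF : ∀ g ∈ F, g ∉ SA := by
      intro g hgF hgA
      rw [hF, mem_erase] at hgF
      obtain ⟨hg0, hgi⟩ := hgF
      obtain ⟨⟨a, b⟩, hab, hsum'⟩ := mem_image.mp hgi
      obtain ⟨haB, hbC⟩ := mem_product.mp hab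
      subst hsum'
      have haR : Lp a ∈ R := (mem_filter.mp haB).2
      have hbR : Lq b ∈ R := (mem_filter.mp hbC).2
      have hgR : Lh (a + b) ∈ R := (mem_filter.mp hgA).2
      have hsub3 : ({Lh (a+b), Lp a, Lq b} : Finset (Finset (Pt Γ))) ⊆
          R.filter (fun l => (Sum.inl (a, a + b) : Pt Γ) ∈ l) := by
        intro l hl
        simp only [mem_insert, mem_singleton] at hl
        rcases hl with rfl | rfl | rfl
        · exact mem_filter.mpr ⟨hgR, by simp⟩
        · exact mem_filter.mpr ⟨haR, by simp [hg0]⟩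
        · exact mem_filter.mpr ⟨hbR, by simp [hg0]⟩
      have hc3 : ({Lh (a+b), Lp a, Lq b} : Finset (Finset (Pt Γ))).card = 3 := by
        rw [card_insert_of_notMem, card_insert_of_notMem, card_singleton]
        · simp only [mem_singleton]
          exact Lp_ne_Lq
        · simp only [mem_insert, mem_singleton]
          push_neg
          exact ⟨Lh_ne_Lp, Lh_ne_Lq⟩
      have h1 := (card_le_card hsub3).trans (hpack _)
      rw [hc3] at h1
      omega
    have hAsub : SA ⊆ univ \ insert 0 F := by
      intro g hg
      rw [mem_sdiff]
      refine ⟨mem_univ _, ?_⟩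
      rw [mem_insert]
      rintro (rfl | hgF)
      · exact hA0 hg
      · exact hAF g hgF hg
    have h0F : (0:Γ) ∉ F := notMem_erase _ _
    have h1 := card_le_card hAsub
    rw [card_sdiff_of_subset (subset_univ _), card_insert_of_notMem h0F, card_univ, hn] at h1
    have h2' := card_le_card (subset_univ (insert (0:Γ) F))
    rw [card_insert_of_notMem h0F, card_univ, hn] at h2'
    have hkey := key_count h2 SB SC hBle hCle
    rw [← hF] at hkey
    omega
  -- Lower bound: explicit construction
  set R0 : Finset (Finset (Pt Γ)) :=
    ((univ.filter fun g : Γ => g ∉ ({0, d, -d} : Finset Γ)).image Lh) ∪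
      {Lp 0, Lp d, Lq 0, Lq (-d)} with hR0
  have hsubCL : R0 ⊆ CL Γ := by
    intro l hl
    rcases mem_union.mp hl with h | h
    · obtain ⟨g, hg, rfl⟩ := mem_image.mp h
      have hg' := (mem_filter.mp hg).2
      simp only [mem_insert, mem_singleton] at hg'
      push_neg at hg'
      exact Lh_mem_CL hg'.1
    · simp only [mem_insert, mem_singleton] at h
      rcases h with rfl | rfl | rfl | rfl
      · exact Lp_mem_CL 0
      · exact Lp_mem_CL d
      · exact Lq_mem_CL 0
      · exact Lq_mem_CL (-d)
  have hpack0 : ∀ x : Pt Γ, (R0.filter fun l => x ∈ l).card ≤ 2 := by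
    intro x
    rcases x with ⟨a, b⟩ | c
    · refine card_le_two_of (u := Lh b) (v := Lp a) (w := Lq (b - a)) ?_ ?_
      · intro l hl
        rw [mem_filter] at hl
        exact CL_inl (hsubCL hl.1) hl.2
      · by_contra hcon
        push_neg at hcon
        obtain ⟨hu, hv, hw⟩ := hcon
        rw [mem_filter] at hu hv hw
        have hb : b ≠ 0 ∧ b ≠ d ∧ b ≠ -d := by
          rcases mem_union.mp hu.1 with h | h
          · obtain ⟨g, hg, e⟩ := mem_image.mp h
            obtain rfl := Lh_inj e
            have hb' := (mem_filter.mp hg).2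
            simp only [mem_insert, mem_singleton] at hb'
            push_neg at hb'
            exact hb'
          · simp only [mem_insert, mem_singleton] at h
            rcases h with e | e | e | e
            · exact absurd e Lh_ne_Lp
            · exact absurd e Lh_ne_Lp
            · exact absurd e Lh_ne_Lq
            · exact absurd e Lh_ne_Lq
        have ha : a = 0 ∨ a = d := by
          rcases mem_union.mp hv.1 with h | h
          · obtain ⟨g, _, e⟩ := mem_image.mp h
            exact absurd e Lh_ne_Lp
          · simp only [mem_insert, mem_singleton] at h
            rcases h with e | e | e | e
            · exact Or.inl (Lp_inj e)
            · exact Or.inr (Lp_inj e)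
            · exact absurd e Lp_ne_Lq
            · exact absurd e Lp_ne_Lq
        have hba : b - a = 0 ∨ b - a = -d := by
          rcases mem_union.mp hw.1 with h | h
          · obtain ⟨g, _, e⟩ := mem_image.mp h
            exact absurd e Lh_ne_Lq
          · simp only [mem_insert, mem_singleton] at h
            rcases h with e | e | e | e
            · exact absurd e.symm Lp_ne_Lq
            · exact absurd e.symm Lp_ne_Lq
            · exact Or.inl (Lq_inj e)
            · exact Or.inr (Lq_inj e)
        have hbe : b = a + (b - a) := by abel
        rcases ha with rfl | rfl <;> rcases hba with e | e
        · exact hb.1 (by rw [hbe, e]; abel)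
        · exact hb.2.2 (by rw [hbe, e]; abel)
        · exact hb.2.1 (by rw [hbe, e]; abel)
        · exact hb.1 (by rw [hbe, e]; abel)
    · cases c
      · have hsub' : R0.filter (fun l => (Sum.inr false : Pt Γ) ∈ l) ⊆ {Lp 0, Lp d} := by
          intro l hl
          rw [mem_filter] at hl
          obtain ⟨hlR, hlx⟩ := hl
          rcases mem_union.mp hlR with h | h
          · obtain ⟨g, -, rfl⟩ := mem_image.mp h
            exact absurd hlx inr_mem_Lh
          · simp only [mem_insert, mem_singleton] at h
            rcases h with rfl | rfl | rfl | rfl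
            · simp
            · simp
            · exact absurd hlx (by simp)
            · exact absurd hlx (by simp)
        exact (card_le_card hsub').trans ((card_insert_le _ _).trans (by simp))
      · have hsub' : R0.filter (fun l => (Sum.inr true : Pt Γ) ∈ l) ⊆ {Lq 0, Lq (-d)} := by
          intro l hl
          rw [mem_filter] at hl
          obtain ⟨hlR, hlx⟩ := hl
          rcases mem_union.mp hlR with h | h
          · obtain ⟨g, -, rfl⟩ := mem_image.mp h
            exact absurd hlx inr_mem_Lh
          · simp only [mem_insert, mem_singleton] at h
            rcases h with rfl | rfl | rfl | rfl
            · exact absurd hlx (by simp)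
            · exact absurd hlx (by simp)
            · simp
            · simp
        exact (card_le_card hsub').trans ((card_insert_le _ _).trans (by simp))
  have hT3 : ({0, d, -d} : Finset Γ).card = 3 := by
    rw [card_insert_of_notMem (by simp [h0d, h0nd]),
      card_insert_of_notMem (by simp [hdd]), card_singleton]
  have hdisj : Disjoint ((univ.filter fun g : Γ => g ∉ ({0, d, -d} : Finset Γ)).image Lh)
      ({Lp 0, Lp d, Lq 0, Lq (-d)} : Finset (Finset (Pt Γ))) := by
    rw [disjoint_left]
    intro l hl hl'
    obtain ⟨g, -, rfl⟩ := mem_image.mp hl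
    simp only [mem_insert, mem_singleton] at hl'
    rcases hl' with e | e | e | e
    · exact Lh_ne_Lp e
    · exact Lh_ne_Lp e
    · exact Lh_ne_Lq e
    · exact Lh_ne_Lq e
  have hq4 : ({Lp 0, Lp d, Lq 0, Lq (-d)} : Finset (Finset (Pt Γ))).card = 4 := by
    have n1 : Lp (0:Γ) ∉ ({Lp d, Lq 0, Lq (-d)} : Finset (Finset (Pt Γ))) := by
      simp only [mem_insert, mem_singleton]
      push_neg
      exact ⟨fun e => h0d (Lp_inj e), fun e => Lp_ne_Lq e, fun e => Lp_ne_Lq e⟩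
    have n2 : Lp d ∉ ({Lq 0, Lq (-d)} : Finset (Finset (Pt Γ))) := by
      simp only [mem_insert, mem_singleton]
      push_neg
      exact ⟨fun e => Lp_ne_Lq e, fun e => Lp_ne_Lq e⟩
    have n3 : Lq (0:Γ) ∉ ({Lq (-d)} : Finset (Finset (Pt Γ))) := by
      simp only [mem_singleton]
      exact fun e => h0nd (Lq_inj e)
    rw [card_insert_of_notMem n1, card_insert_of_notMem n2, card_insert_of_notMem n3,
      card_singleton]
  have himgcard : ((univ.filter fun g : Γ => g ∉ ({0, d, -d} : Finset Γ)).image Lh).card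
      = n - 3 := by
    rw [card_image_of_injective _ (fun a b e => Lh_inj e)]
    have he : (univ.filter fun g : Γ => g ∉ ({0, d, -d} : Finset Γ))
        = univ \ ({0, d, -d} : Finset Γ) := by
      ext g
      simp [mem_sdiff]
    rw [he, card_sdiff_of_subset (subset_univ _), card_univ, hn, hT3]
  have hcardR0 : R0.card = n + 1 := by
    rw [hR0, card_union_of_disjoint hdisj, himgcard, hq4]
    omega
  have hmem : ∃ R : Finset (Finset (Pt Γ)), R ⊆ CL Γ ∧
      (∀ x : Pt Γ, (R.filter fun l => x ∈ l).card ≤ 2) ∧ R.card = n + 1 :=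
    ⟨R0, hsubCL, hpack0, hcardR0⟩
  unfold nu2
  exact le_antisymm (csSup_le ⟨n + 1, hmem⟩ fun m hm => hub m hm)
    (le_csSup ⟨n + 1, fun m hm => hub m hm⟩ hmem)
end

section
/- In the construction C_{n,n+1} for odd n ≥ 3, for every line l_{p_a} ∈ 𝓛_p there exists a unique line l_{q_b} ∈ 𝓛_q with l_{p_a} ∩ l_{q_b} = ∅; explicitly, l_{p_a} and l_{q_b} are disjoint if and only if a + b = 0 in Γ. -/
open Finset

variable {Γ : Type} [AddCommGroup Γ] [Fintype Γ] [DecidableEq Γ]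

lemma key (a b : Γ) : Lp a ∩ Lq b = ∅ ↔ a + b = 0 := by
  rw [Finset.eq_empty_iff_forall_notMem]
  simp only [Lp, Lq, Finset.mem_inter, Finset.mem_union, Finset.mem_image,
    Finset.mem_filter, Finset.mem_univ, true_and, Finset.mem_singleton]
  constructor
  · intro H
    by_contra hab
    exact H (Sum.inl (a, a + b)) ⟨Or.inl ⟨a + b, hab, rfl⟩, Or.inl ⟨a, hab, rfl⟩⟩
  · rintro hab x ⟨h1, h2⟩
    rcases h1 with ⟨h, hh, rfl⟩ | rfl
    · rcases h2 with ⟨h', hh', he⟩ | he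
      · obtain ⟨rfl, rfl⟩ : h' = a ∧ h' + b = h := by
          simpa [Prod.ext_iff, eq_comm] using he
        exact hh' (by rw [hab])
      · simp at he
    · rcases h2 with ⟨h', hh', he⟩ | he <;> simp at he

/-- For every line `l_{p_a}` there is a unique line `l_{q_b}` disjoint from it; explicitly,
`l_{p_a} ∩ l_{q_b} = ∅` iff `a + b = 0`. -/
theorem Lp_disjoint_Lq_iff (n : ℕ) (hn : Fintype.card Γ = n) (hodd : Odd n) (h3 : 3 ≤ n) :
    (∀ a b : Γ, Lp a ∩ Lq b = ∅ ↔ a + b = 0) ∧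
    (∀ a : Γ, ∃! b : Γ, Lp a ∩ Lq b = ∅) := by
  refine ⟨key, fun a => ⟨-a, ?_, fun b hb => ?_⟩⟩
  · show Lp a ∩ Lq (-a) = ∅
    rw [key]; abel
  · exact neg_eq_of_add_eq_zero_right ((key a b).mp hb) ▸ rfl
end
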